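/- arXiv:0804.1589 — 4 statements merged into one kernel-verified Lean document; each statement's English description precedes it below -/
import Mathlib

section
/- Duhamel-type identity: for bounded operators x, y on a Hilbert space, e^x e^{-y} = 1 + ∫₀¹ e^{t x} (x − y) e^{-t y} dt. In particular, if x − y is trace class then e^x e^{-y} − 1 is trace class. -/
open NormedSpace

/-! The function `t ↦ e^{t x} e^{-t y}` has derivative `e^{t x} (x - y) e^{-t y}`, so the identity
is the fundamental theorem of calculus on `[0, 1]`. If `x - y` lies in a closed two-sided ideal,
so does the integrand at every `t`, hence also its integral: a closed subspace is complete, and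
the Bochner integral commutes with its isometric inclusion. -/

open MeasureTheory in
theorem Submodule.integral_mem {X E : Type*} [MeasurableSpace X] {μ : Measure X}
    [NormedAddCommGroup E] [NormedSpace ℝ E] [CompleteSpace E]
    (S : Submodule ℝ E) (hS : IsClosed (S : Set E)) {f : X → E} (hf : ∀ x, f x ∈ S) :
    ∫ x, f x ∂μ ∈ S := by
  have : CompleteSpace S := hS.completeSpace_coe
  have h := S.subtypeₗᵢ.integral_comp_comm (μ := μ) fun x => (⟨f x, hf x⟩ : S)
  exact h ▸ (∫ x, (⟨f x, hf x⟩ : S) ∂μ).2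

theorem Submodule.intervalIntegral_mem {E : Type*}
    [NormedAddCommGroup E] [NormedSpace ℝ E] [CompleteSpace E]
    (S : Submodule ℝ E) (hS : IsClosed (S : Set E)) {f : ℝ → E} (hf : ∀ t, f t ∈ S) (a b : ℝ) :
    ∫ t in a..b, f t ∈ S :=
  S.sub_mem (S.integral_mem hS hf) (S.integral_mem hS hf)

section Duhamel

variable {𝔸 : Type*} [NormedRing 𝔸] [CompleteSpace 𝔸]

theorem hasDerivAt_exp_smul_mul_exp_neg_smul {𝕂 : Type*} [RCLike 𝕂] [NormedAlgebra 𝕂 𝔸]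
    (x y : 𝔸) (t : 𝕂) :
    HasDerivAt (fun t : 𝕂 => exp (t • x) * exp (-(t • y)))
      (exp (t • x) * (x - y) * exp (-(t • y))) t := by
  have hy := hasDerivAt_exp_smul_const' (-y) t
  simp only [smul_neg] at hy
  refine ((hasDerivAt_exp_smul_const x t).mul hy).congr_deriv ?_
  noncomm_ring

variable [NormedAlgebra ℝ 𝔸]

theorem continuous_exp_smul_mul_mul_exp_neg_smul (x y z : 𝔸) :
    Continuous fun t : ℝ => exp (t • x) * z * exp (-(t • y)) := by
  have hy := (differentiable_exp_smul_const ℝ (-y)).continuous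
  simp only [smul_neg] at hy
  exact ((differentiable_exp_smul_const ℝ x).continuous.mul continuous_const).mul hy

theorem exp_mul_exp_neg_eq_one_add_integral (x y : 𝔸) :
    exp x * exp (-y) = 1 + ∫ t in (0 : ℝ)..1, exp (t • x) * (x - y) * exp (-(t • y)) := by
  rw [intervalIntegral.integral_eq_sub_of_hasDerivAt
    (fun t _ => hasDerivAt_exp_smul_mul_exp_neg_smul x y t)
    ((continuous_exp_smul_mul_mul_exp_neg_smul x y (x - y)).intervalIntegrable 0 1)]
  simp

end Duhamel

/-- Duhamel-type identity: for bounded operators `x, y` on a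
complex Hilbert space, `e^x e^{-y} = 1 + ∫₀¹ e^{t x} (x - y) e^{-t y} dt`.
In particular, if `x - y` belongs to a closed two-sided ideal `L1`
(e.g. the trace-class operators), then `e^x e^{-y} - 1 ∈ L1`. -/
theorem stmt_4 {H : Type*} [NormedAddCommGroup H] [InnerProductSpace ℂ H]
    [CompleteSpace H]
    (L1 : Submodule ℂ (H →L[ℂ] H))
    (hL1closed : IsClosed (L1 : Set (H →L[ℂ] H)))
    (hL1l : ∀ (a T : H →L[ℂ] H), T ∈ L1 → a * T ∈ L1)
    (hL1r : ∀ (a T : H →L[ℂ] H), T ∈ L1 → T * a ∈ L1)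
    (x y : H →L[ℂ] H) :
    (exp x * exp (-y) =
      1 + ∫ t in (0:ℝ)..1, exp (t • x) * (x - y) * exp (-(t • y))) ∧
    (x - y ∈ L1 → exp x * exp (-y) - 1 ∈ L1) := by
  refine ⟨exp_mul_exp_neg_eq_one_add_integral x y, fun hxy => ?_⟩
  rw [exp_mul_exp_neg_eq_one_add_integral x y, add_sub_cancel_left]
  exact (L1.restrictScalars ℝ).intervalIntegral_mem hL1closed
    (fun t => hL1r _ _ (hL1l _ _ hxy)) 0 1
end

section
/- Let S be the unilateral shift on ℓ²(ℕ) and let b : S¹ → ℂ be a smooth function with Fourier expansion b(z) = Σ_{l∈ℤ} b_l z^l, and set b(S) = Σ_{l≥0} b_l S^l + Σ_{l>0} b_{-l} (S^l)*. Then S b(S) S* − b(S) is trace class and Tr(S b(S) S* − b(S)) = −b₀. -/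
open ContinuousLinearMap

namespace HilbertBasis

variable {𝕜 H : Type*} [RCLike 𝕜] [NormedAddCommGroup H] [InnerProductSpace 𝕜 H]
  [CompleteSpace H] (e : HilbertBasis ℕ 𝕜 H) {S : H →L[𝕜] H}

theorem adjoint_shift_apply_zero (hS : ∀ n, S (e n) = e (n + 1)) : adjoint S (e 0) = 0 := by
  apply e.repr.injective
  ext i
  simp [e.repr_apply_apply, adjoint_inner_right, hS, orthonormal_iff_ite.mp e.orthonormal]

theorem adjoint_shift_apply_succ (hS : ∀ n, S (e n) = e (n + 1)) (n : ℕ) :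
    adjoint S (e (n + 1)) = e n := by
  apply e.repr.injective
  ext i
  simp [e.repr_apply_apply, adjoint_inner_right, hS, orthonormal_iff_ite.mp e.orthonormal]

/-- Conjugating by the shift moves the diagonal of `B` one step down, so for a constant diagonal
only the corner entry survives. -/
theorem inner_shift_conj_sub_apply_self (hS : ∀ n, S (e n) = e (n + 1)) {B : H →L[𝕜] H}
    {c : 𝕜} (hdiag : ∀ n, inner 𝕜 (e n) (B (e n)) = c) (m : ℕ) :
    inner 𝕜 (e m) ((S * B * adjoint S - B) (e m)) = if m = 0 then -c else 0 := by
  have hconj : ∀ x, inner 𝕜 x ((S * B * adjoint S) x) = inner 𝕜 (adjoint S x) (B (adjoint S x)) :=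
    fun x => (adjoint_inner_left S _ x).symm
  rw [sub_apply, inner_sub_right, hconj, hdiag]
  cases m with
  | zero => simp [e.adjoint_shift_apply_zero hS]
  | succ n => simp [e.adjoint_shift_apply_succ hS, hdiag]

end HilbertBasis

theorem stmt_6_general {H : Type*} [NormedAddCommGroup H] [InnerProductSpace ℂ H]
    [CompleteSpace H] (e : HilbertBasis ℕ ℂ H)
    (S : H →L[ℂ] H) (hS : ∀ n : ℕ, S (e n) = e (n + 1))
    (b : ℤ → ℂ)
    (B : H →L[ℂ] H)
    (hB : ∀ i j : ℕ, (inner ℂ (e i) (B (e j)) : ℂ) = b ((i : ℤ) - (j : ℤ))) :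
    Summable (fun m : ℕ =>
        ‖(inner ℂ (e m) ((S * B * adjoint S - B) (e m)) : ℂ)‖) ∧
    HasSum (fun m : ℕ =>
        (inner ℂ (e m) ((S * B * adjoint S - B) (e m)) : ℂ)) (-(b 0)) := by
  have hdiag : ∀ n, inner ℂ (e n) (B (e n)) = b 0 := fun n => by simpa using hB n n
  have hentry := e.inner_shift_conj_sub_apply_self hS hdiag
  refine ⟨?_, ?_⟩
  · simp_rw [hentry, apply_ite norm, norm_zero]
    exact (hasSum_ite_eq 0 _).summable
  · simp_rw [hentry]
    exact hasSum_ite_eq 0 _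

/-- Let `S` be the unilateral shift on `ℓ²(ℕ)` (via a Hilbert
basis `e` with `S (e n) = e (n+1)`) and `b : S¹ → ℂ` smooth with rapidly
decaying Fourier coefficients `(b l)_{l ∈ ℤ}`; let `B = b(S)` be the
associated Toeplitz-type operator, with matrix entries `⟨e i, B (e j)⟩ = b (i - j)`.
Then `S b(S) S* - b(S)` is trace class and `Tr (S b(S) S* - b(S)) = -b₀`:
its diagonal with respect to the basis is absolutely summable with sum `-b 0`. -/
theorem stmt_6 {H : Type*} [NormedAddCommGroup H] [InnerProductSpace ℂ H]
    [CompleteSpace H] (e : HilbertBasis ℕ ℂ H)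
    (S : H →L[ℂ] H) (hS : ∀ n : ℕ, S (e n) = e (n + 1))
    (b : ℤ → ℂ)
    (hdecay : ∀ k : ℕ, Summable fun l : ℤ => |(l : ℝ)| ^ k * ‖b l‖)
    (B : H →L[ℂ] H)
    (hB : ∀ i j : ℕ, (inner ℂ (e i) (B (e j)) : ℂ) = b ((i : ℤ) - (j : ℤ))) :
    Summable (fun m : ℕ =>
        ‖(inner ℂ (e m) ((S * B * adjoint S - B) (e m)) : ℂ)‖) ∧
    HasSum (fun m : ℕ =>
        (inner ℂ (e m) ((S * B * adjoint S - B) (e m)) : ℂ)) (-(b 0)) :=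
  stmt_6_general e S hS b B hB
end

section
/- Let S be the unilateral shift on ℓ²(ℕ) and a, b : S¹ → ℂ smooth functions with Fourier coefficients (a_k), (b_l), and a(S), b(S) the associated operators as above. Then the commutator [a(S), b(S)] is trace class and Tr[a(S), b(S)] = Σ_{k∈ℤ} k a_{-k} b_k. -/
/-!
Write `c k = a (-k) * b k`. Expanding in the basis, the `m`-th diagonal entries of `A * B` and
`B * A` are `∑_{k ≥ -m} c k` and `∑_{k ≤ m} c k`, so that of the commutator is
`∑_{k > m} c k - ∑_{k < -m} c k`. Hence `c k` occurs in exactly `|k|` diagonal entries, each time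
with sign `sign k`. Since `∑ |k| ‖c k‖ < ∞` by the decay of `a` and `b`, the double series over
`(m, k)` converges absolutely and may be summed over `m` first, giving `∑ k, k * c k`.
-/

theorem HilbertBasis.hasSum_inner_apply_mul_inner {ι 𝕜 E F G : Type*} [RCLike 𝕜]
    [NormedAddCommGroup E] [InnerProductSpace 𝕜 E] [NormedAddCommGroup F] [InnerProductSpace 𝕜 F]
    [NormedAddCommGroup G] [InnerProductSpace 𝕜 G]
    (e : HilbertBasis ι 𝕜 F) (T : F →L[𝕜] G) (U : E →L[𝕜] F) (x : G) (y : E) :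
    HasSum (fun n => inner 𝕜 x (T (e n)) * inner 𝕜 (e n) (U y)) (inner 𝕜 x (T (U y))) := by
  simpa [e.repr_apply_apply, mul_comm] using ((e.hasSum_repr (U y)).mapL T).mapL (innerSL 𝕜 x)

theorem Function.Injective.hasSum_indicator_range {α β γ : Type*} [AddCommMonoid α]
    [TopologicalSpace α] {g : γ → β} (hg : Function.Injective g) {f : β → α} {a : α}
    (h : HasSum (f ∘ g) a) : HasSum ((Set.range g).indicator f) a :=
  hasSum_subtype_iff_indicator.mp (hg.hasSum_range_iff.mpr h)

theorem Int.range_natCast_sub (m : ℤ) : Set.range (fun n : ℕ => (n : ℤ) - m) = Set.Ici (-m) := by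
  ext k
  simp only [Set.mem_range, Set.mem_Ici]
  exact ⟨by rintro ⟨n, rfl⟩; omega, fun h => ⟨(k + m).toNat, by omega⟩⟩

theorem Int.range_sub_natCast (m : ℤ) : Set.range (fun n : ℕ => m - n) = Set.Iic m := by
  ext k
  simp only [Set.mem_range, Set.mem_Iic]
  exact ⟨by rintro ⟨n, rfl⟩; omega, fun h => ⟨(m - k).toNat, by omega⟩⟩

theorem hasSum_ite_lt {M : Type*} [AddCommMonoid M] [TopologicalSpace M] (n : ℕ) (x : M) :
    HasSum (fun m : ℕ => if m < n then x else 0) (n • x) := by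
  convert hasSum_sum_of_ne_finset_zero (L := SummationFilter.unconditional ℕ) (s := Finset.range n)
    (f := fun m : ℕ => if m < n then x else 0) (fun m hm => if_neg (by simpa using hm)) using 1
  rw [Finset.sum_congr rfl fun m hm => if_pos (Finset.mem_range.mp hm)]
  simp

/-- The coefficient of `c k` in the `m`-th diagonal entry of the commutator: `1` for `k > m`,
`-1` for `k < -m`, and `0` otherwise. -/
def diagWeight (m : ℕ) (k : ℤ) : ℤ := if m < k.natAbs then k.sign else 0

section

variable {M : Type*} [AddCommGroup M]

theorem hasSum_diagWeight_smul [TopologicalSpace M] (k : ℤ) (x : M) :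
    HasSum (fun m : ℕ => diagWeight m k • x) (k • x) := by
  convert hasSum_ite_lt k.natAbs (k.sign • x) using 1
  · ext m; unfold diagWeight; split_ifs <;> simp
  · rw [← natCast_zsmul, smul_smul, mul_comm, Int.sign_mul_natAbs]

theorem hasSum_norm_diagWeight_smul {E : Type*} [SeminormedAddCommGroup E] (k : ℤ) (x : E) :
    HasSum (fun m : ℕ => ‖diagWeight m k • x‖) (|(k : ℝ)| * ‖x‖) := by
  convert hasSum_ite_lt k.natAbs ‖x‖ using 1
  · ext m
    unfold diagWeight
    split_ifs with h
    · rcases lt_or_gt_of_ne (show k ≠ 0 by omega) with hk | hk <;>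
        simp [Int.sign_eq_neg_one_of_neg, Int.sign_eq_one_of_pos, hk]
    · simp
  · rw [nsmul_eq_mul, Nat.cast_natAbs, Int.cast_abs]

theorem indicator_Ici_sub_indicator_Iic (c : ℤ → M) (m : ℕ) (k : ℤ) :
    (Set.Ici (-(m : ℤ))).indicator c k - (Set.Iic (m : ℤ)).indicator c k = diagWeight m k • c k := by
  unfold diagWeight
  rcases lt_trichotomy k 0 with hk | rfl | hk
  · simp only [Set.indicator_apply, Set.mem_Ici, Set.mem_Iic, Int.sign_eq_neg_one_of_neg hk,
      ite_smul, neg_smul, one_smul, zero_smul]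
    split_ifs <;> first | omega | simp
  · simp
  · simp only [Set.indicator_apply, Set.mem_Ici, Set.mem_Iic, Int.sign_eq_one_of_pos hk,
      ite_smul, one_smul, zero_smul]
    split_ifs <;> first | omega | simp

end

theorem summable_norm_and_hasSum_of_summable_norm {β γ E : Type*} [NormedAddCommGroup E]
    [CompleteSpace E] {f : β → γ → E} {d : β → E} {s : γ → E}
    (hrow : ∀ m, HasSum (f m) (d m)) (hcol : ∀ k, HasSum (fun m => f m k) (s k))
    (hcolNorm : ∀ k, Summable fun m => ‖f m k‖) (hsum : Summable fun k => ∑' m, ‖f m k‖) :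
    Summable (fun m => ‖d m‖) ∧ HasSum d (∑' k, s k) := by
  have hnorm' : Summable fun p : γ × β => ‖f p.2 p.1‖ :=
    (summable_prod_of_nonneg fun _ => norm_nonneg _).mpr ⟨hcolNorm, hsum⟩
  have hnorm : Summable fun p : β × γ => ‖f p.1 p.2‖ := hnorm'.prod_symm
  have hF : Summable fun p : β × γ => f p.1 p.2 := hnorm.of_norm
  constructor
  · refine hnorm.prod.of_nonneg_of_le (fun _ => norm_nonneg _) fun m => ?_
    rw [← (hrow m).tsum_eq]
    exact norm_tsum_le_tsum_norm (hnorm.prod_factor m)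
  · rw [(hF.prod_symm.hasSum.prod_fiberwise hcol).tsum_eq]
    convert hF.hasSum.prod_fiberwise hrow using 1
    exact (Equiv.prodComm γ β).tsum_eq fun p : β × γ => f p.1 p.2

theorem summable_abs_mul_norm_neg_mul {R : Type*} [NormedRing R] {a b : ℤ → R}
    (ha : Summable fun l => ‖a l‖) (hb : Summable fun l : ℤ => |(l : ℝ)| * ‖b l‖) :
    Summable fun k : ℤ => |(k : ℝ)| * ‖a (-k) * b k‖ := by
  refine (hb.mul_left (∑' l, ‖a l‖)).of_nonneg_of_le (fun _ => by positivity) fun k => ?_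
  calc |(k : ℝ)| * ‖a (-k) * b k‖ ≤ ‖a (-k)‖ * (|(k : ℝ)| * ‖b k‖) := by
        rw [mul_left_comm]; gcongr; exact norm_mul_le _ _
    _ ≤ (∑' l, ‖a l‖) * (|(k : ℝ)| * ‖b k‖) := by
        gcongr; exact ha.le_tsum _ fun _ _ => norm_nonneg _

section Toeplitz

variable {H : Type*} [NormedAddCommGroup H] [InnerProductSpace ℂ H] (e : HilbertBasis ℕ ℂ H)
  {A B : H →L[ℂ] H} {a b : ℤ → ℂ}

theorem hasSum_inner_toeplitz_mul_apply
    (hA : ∀ i j : ℕ, (inner ℂ (e i) (A (e j)) : ℂ) = a ((i : ℤ) - (j : ℤ)))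
    (hB : ∀ i j : ℕ, (inner ℂ (e i) (B (e j)) : ℂ) = b ((i : ℤ) - (j : ℤ))) (m : ℕ) :
    HasSum (fun n : ℕ => a (-((n : ℤ) - m)) * b ((n : ℤ) - m)) (inner ℂ (e m) ((A * B) (e m))) := by
  simpa only [hA, hB, neg_sub, mul_apply_eq_comp] using e.hasSum_inner_apply_mul_inner A B (e m) (e m)

theorem hasSum_inner_toeplitz_commutator_apply
    (hA : ∀ i j : ℕ, (inner ℂ (e i) (A (e j)) : ℂ) = a ((i : ℤ) - (j : ℤ)))
    (hB : ∀ i j : ℕ, (inner ℂ (e i) (B (e j)) : ℂ) = b ((i : ℤ) - (j : ℤ))) (m : ℕ) :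
    HasSum (fun k : ℤ => diagWeight m k • (a (-k) * b k))
      (inner ℂ (e m) ((A * B - B * A) (e m))) := by
  set c : ℤ → ℂ := fun k => a (-k) * b k
  have hAB : HasSum ((Set.Ici (-(m : ℤ))).indicator c) (inner ℂ (e m) ((A * B) (e m))) := by
    rw [← Int.range_natCast_sub]
    exact (sub_left_injective.comp Nat.cast_injective).hasSum_indicator_range
      (hasSum_inner_toeplitz_mul_apply e hA hB m)
  have hBA : HasSum ((Set.Iic (m : ℤ)).indicator c) (inner ℂ (e m) ((B * A) (e m))) := by
    rw [← Int.range_sub_natCast]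
    refine (sub_right_injective.comp Nat.cast_injective).hasSum_indicator_range ?_
    refine (hasSum_inner_toeplitz_mul_apply e hB hA m).congr_fun fun n => ?_
    simp only [c, Function.comp_apply, neg_sub, mul_comm]
  simpa only [sub_apply, inner_sub_right, indicator_Ici_sub_indicator_Iic] using hAB.sub hBA

end Toeplitz

theorem stmt_7_general {H : Type*} [NormedAddCommGroup H] [InnerProductSpace ℂ H]
    (e : HilbertBasis ℕ ℂ H)
    (a b : ℤ → ℂ)
    (hadecay : ∀ k : ℕ, Summable fun l : ℤ => |(l : ℝ)| ^ k * ‖a l‖)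
    (hbdecay : ∀ k : ℕ, Summable fun l : ℤ => |(l : ℝ)| ^ k * ‖b l‖)
    (A B : H →L[ℂ] H)
    (hA : ∀ i j : ℕ, (inner ℂ (e i) (A (e j)) : ℂ) = a ((i : ℤ) - (j : ℤ)))
    (hB : ∀ i j : ℕ, (inner ℂ (e i) (B (e j)) : ℂ) = b ((i : ℤ) - (j : ℤ))) :
    Summable (fun m : ℕ =>
        ‖(inner ℂ (e m) ((A * B - B * A) (e m)) : ℂ)‖) ∧
    HasSum (fun m : ℕ => (inner ℂ (e m) ((A * B - B * A) (e m)) : ℂ))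
      (∑' k : ℤ, (k : ℂ) * a (-k) * b k) := by
  have hc := summable_abs_mul_norm_neg_mul (by simpa using hadecay 0) (by simpa using hbdecay 1)
  obtain ⟨hnorm, hsum⟩ := summable_norm_and_hasSum_of_summable_norm
    (hasSum_inner_toeplitz_commutator_apply e hA hB)
    (fun k => hasSum_diagWeight_smul k (a (-k) * b k))
    (fun k => (hasSum_norm_diagWeight_smul k _).summable)
    (hc.congr fun k => (hasSum_norm_diagWeight_smul k _).tsum_eq.symm)
  refine ⟨hnorm, ?_⟩
  simpa only [zsmul_eq_mul, mul_assoc] using hsum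

/-- Let `S` be the unilateral shift on `ℓ²(ℕ)` (via a Hilbert
basis `e` with `S (e n) = e (n+1)`) and `a, b : S¹ → ℂ` smooth with rapidly
decaying Fourier coefficients `(a k)`, `(b l)`; let `A = a(S)`, `B = b(S)` be
the associated operators, with matrix entries `⟨e i, A (e j)⟩ = a (i - j)`
and `⟨e i, B (e j)⟩ = b (i - j)`. Then the commutator `[a(S), b(S)]` is trace
class and `Tr [a(S), b(S)] = Σ_{k ∈ ℤ} k a_{-k} b_k`: its diagonal with
respect to the basis is absolutely summable with sum `Σ_k k a (-k) b k`. -/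
theorem stmt_7 {H : Type*} [NormedAddCommGroup H] [InnerProductSpace ℂ H]
    [CompleteSpace H] (e : HilbertBasis ℕ ℂ H)
    (S : H →L[ℂ] H) (hS : ∀ n : ℕ, S (e n) = e (n + 1))
    (a b : ℤ → ℂ)
    (hadecay : ∀ k : ℕ, Summable fun l : ℤ => |(l : ℝ)| ^ k * ‖a l‖)
    (hbdecay : ∀ k : ℕ, Summable fun l : ℤ => |(l : ℝ)| ^ k * ‖b l‖)
    (A B : H →L[ℂ] H)
    (hA : ∀ i j : ℕ, (inner ℂ (e i) (A (e j)) : ℂ) = a ((i : ℤ) - (j : ℤ)))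
    (hB : ∀ i j : ℕ, (inner ℂ (e i) (B (e j)) : ℂ) = b ((i : ℤ) - (j : ℤ))) :
    Summable (fun m : ℕ =>
        ‖(inner ℂ (e m) ((A * B - B * A) (e m)) : ℂ)‖) ∧
    HasSum (fun m : ℕ => (inner ℂ (e m) ((A * B - B * A) (e m)) : ℂ))
      (∑' k : ℤ, (k : ℂ) * a (-k) * b k) :=
  stmt_7_general e a b hadecay hbdecay A B hA hB
end

section
/- Let σ₁, σ₂ : [0,1] → GL(H) be C¹ paths of invertible operators such that σ₂(t) σ₁(t)⁻¹ − 1 is trace class for all t (C¹ in trace norm). Then Tr( (σ₁σ₂⁻¹)'(t) · σ₂(t)σ₁(t)⁻¹ ) = Tr( σ₁'(t)σ₁(t)⁻¹ − (σ₂σ₁⁻¹)(t)⁻¹ σ₂'(t)σ₂(t)⁻¹ (σ₂σ₁⁻¹)(t) ), and if moreover σ₁'(t)σ₁(t)⁻¹ − σ₂'(t)σ₂(t)⁻¹ is trace class, this equals Tr( σ₁'(t)σ₁(t)⁻¹ − σ₂'(t)σ₂(t)⁻¹ ). -/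
/-!
Differentiating the identity `(σ₁ σ₂⁻¹) σ₂ = σ₁` gives `(σ₁ σ₂⁻¹)' = (σ₁' - σ₁ σ₂⁻¹ σ₂') σ₂⁻¹`, and
multiplying on the right by `u = σ₂ σ₁⁻¹` yields the first identity already at the level of operators.
For the second, write `v = σ₁ σ₂⁻¹ = u⁻¹`, `c = σ₂' σ₂⁻¹` and `u = 1 + α` with `α` trace class. Since
`α v = 1 - v`, we get `Tr (v c u) = Tr (v c) + Tr (α v c) = Tr (v c) + Tr ((1 - v) c) = Tr c`, where
cyclicity is only applied to the trace-class factor `α`.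
-/

theorem HasDerivAt.mul_inverse_deriv_eq {𝕜 𝔸 : Type*} [NontriviallyNormedField 𝕜] [NormedRing 𝔸]
    [NormedAlgebra 𝕜 𝔸] {f g ginv : 𝕜 → 𝔸} {f' g' D : 𝔸} {t : 𝕜}
    (hD : HasDerivAt (fun s => f s * ginv s) D t)
    (hf : HasDerivAt f f' t) (hg : HasDerivAt g g' t)
    (hinv : ∀ s, ginv s * g s = 1) (hinv_t : g t * ginv t = 1) :
    D = (f' - f t * ginv t * g') * ginv t := by
  have hprod : (fun s => f s * ginv s) * g = f := by
    funext s
    rw [Pi.mul_apply, mul_assoc, hinv s, mul_one]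
  have hderiv : D * g t + f t * ginv t * g' = f' :=
    (hD.mul hg).unique (by rwa [hprod])
  rw [← hderiv, add_sub_cancel_right, mul_assoc, hinv_t, mul_one]

theorem map_mul_mul_eq_of_mul_eq_one {R M F : Type*} [Ring R] [AddCommGroup M]
    [FunLike F R M] [AddMonoidHomClass F R M] (Tr : F) {u v : R} (huv : u * v = 1)
    (hcyc : ∀ B, Tr ((u - 1) * B) = Tr (B * (u - 1))) (c : R) :
    Tr (v * c * u) = Tr c := by
  have hαv : (u - 1) * v = 1 - v := by rw [sub_mul, one_mul, huv]
  calc Tr (v * c * u) = Tr (v * c) + Tr (v * c * (u - 1)) := by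
        rw [← map_add, mul_sub, mul_one, add_sub_cancel]
    _ = Tr (v * c) + Tr ((1 - v) * c) := by rw [← hcyc, ← mul_assoc, hαv]
    _ = Tr c := by rw [sub_mul, one_mul, map_sub, add_sub_cancel]

theorem stmt_17_general {H : Type*} [NormedAddCommGroup H] [InnerProductSpace ℂ H]
    (L1 : Submodule ℂ (H →L[ℂ] H))
    (Tr : (H →L[ℂ] H) →ₗ[ℂ] ℂ)
    (hTr : ∀ A B : H →L[ℂ] H, A ∈ L1 → Tr (A * B) = Tr (B * A))
    (σ₁ σ₁' σ₁inv σ₂ σ₂' σ₂inv : ℝ → (H →L[ℂ] H))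
    (hinv₁ : ∀ s : ℝ, σ₁ s * σ₁inv s = 1 ∧ σ₁inv s * σ₁ s = 1)
    (hinv₂ : ∀ s : ℝ, σ₂ s * σ₂inv s = 1 ∧ σ₂inv s * σ₂ s = 1)
    (hσ₁' : ∀ s : ℝ, HasDerivAt σ₁ (σ₁' s) s)
    (hσ₂' : ∀ s : ℝ, HasDerivAt σ₂ (σ₂' s) s)
    (hα : ∀ s : ℝ, σ₂ s * σ₁inv s - 1 ∈ L1)
    (t : ℝ) (D : H →L[ℂ] H)
    (hD : HasDerivAt (fun s => σ₁ s * σ₂inv s) D t) :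
    Tr (D * (σ₂ t * σ₁inv t)) =
      Tr (σ₁' t * σ₁inv t -
        (σ₁ t * σ₂inv t) * (σ₂' t * σ₂inv t) * (σ₂ t * σ₁inv t)) ∧
    (σ₁' t * σ₁inv t - σ₂' t * σ₂inv t ∈ L1 →
      Tr (D * (σ₂ t * σ₁inv t)) = Tr (σ₁' t * σ₁inv t - σ₂' t * σ₂inv t)) := by
  have h₁ := (hinv₁ t).2
  obtain ⟨h₂, h₂'⟩ := hinv₂ t
  have hDval := hD.mul_inverse_deriv_eq (hσ₁' t) (hσ₂' t) (fun s => (hinv₂ s).2) h₂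
  have key : D * (σ₂ t * σ₁inv t) = σ₁' t * σ₁inv t -
      (σ₁ t * σ₂inv t) * (σ₂' t * σ₂inv t) * (σ₂ t * σ₁inv t) := by
    rw [hDval]
    calc (σ₁' t - σ₁ t * σ₂inv t * σ₂' t) * σ₂inv t * (σ₂ t * σ₁inv t)
        = σ₁' t * (σ₂inv t * σ₂ t) * σ₁inv t -
            (σ₁ t * σ₂inv t) * (σ₂' t * σ₂inv t) * (σ₂ t * σ₁inv t) := by noncomm_ring
      _ = _ := by rw [h₂', mul_one]
  have huv : (σ₂ t * σ₁inv t) * (σ₁ t * σ₂inv t) = 1 := by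
    rw [mul_assoc, ← mul_assoc (σ₁inv t), h₁, one_mul, h₂]
  refine ⟨congrArg Tr key, fun _ => ?_⟩
  rw [key, map_sub, map_sub,
    map_mul_mul_eq_of_mul_eq_one Tr huv (fun B => hTr _ B (hα t))]

/-- Let `σ₁, σ₂ : [0,1] → GL(H)` be `C¹` paths of invertible
operators (with inverse paths `σ₁inv, σ₂inv` and derivatives `σ₁', σ₂'`) such
that `σ₂(s) σ₁(s)⁻¹ - 1` is trace class for all `s`. Let `D` denote the
derivative of `s ↦ σ₁(s) σ₂(s)⁻¹` at `t`. Then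
`Tr (D · σ₂(t) σ₁(t)⁻¹) = Tr (σ₁'(t) σ₁(t)⁻¹ - (σ₂ σ₁⁻¹)(t)⁻¹ σ₂'(t) σ₂(t)⁻¹ (σ₂ σ₁⁻¹)(t))`,
and if moreover `σ₁'(t) σ₁(t)⁻¹ - σ₂'(t) σ₂(t)⁻¹` is trace class, this equals
`Tr (σ₁'(t) σ₁(t)⁻¹ - σ₂'(t) σ₂(t)⁻¹)`. Here `L1` is the two-sided ideal of
trace-class operators and `Tr` the operator trace, satisfying
`Tr (A B) = Tr (B A)` for `A ∈ L1`, `B ∈ L(H)`. -/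
theorem stmt_17 {H : Type*} [NormedAddCommGroup H] [InnerProductSpace ℂ H]
    [CompleteSpace H]
    (L1 : Submodule ℂ (H →L[ℂ] H))
    (hL1l : ∀ (a T : H →L[ℂ] H), T ∈ L1 → a * T ∈ L1)
    (hL1r : ∀ (a T : H →L[ℂ] H), T ∈ L1 → T * a ∈ L1)
    (Tr : (H →L[ℂ] H) →ₗ[ℂ] ℂ)
    (hTr : ∀ A B : H →L[ℂ] H, A ∈ L1 → Tr (A * B) = Tr (B * A))
    (σ₁ σ₁' σ₁inv σ₂ σ₂' σ₂inv : ℝ → (H →L[ℂ] H))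
    (hinv₁ : ∀ s : ℝ, σ₁ s * σ₁inv s = 1 ∧ σ₁inv s * σ₁ s = 1)
    (hinv₂ : ∀ s : ℝ, σ₂ s * σ₂inv s = 1 ∧ σ₂inv s * σ₂ s = 1)
    (hσ₁' : ∀ s : ℝ, HasDerivAt σ₁ (σ₁' s) s)
    (hσ₂' : ∀ s : ℝ, HasDerivAt σ₂ (σ₂' s) s)
    (hα : ∀ s : ℝ, σ₂ s * σ₁inv s - 1 ∈ L1)
    (t : ℝ) (D : H →L[ℂ] H)
    (hD : HasDerivAt (fun s => σ₁ s * σ₂inv s) D t) :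
    Tr (D * (σ₂ t * σ₁inv t)) =
      Tr (σ₁' t * σ₁inv t -
        (σ₁ t * σ₂inv t) * (σ₂' t * σ₂inv t) * (σ₂ t * σ₁inv t)) ∧
    (σ₁' t * σ₁inv t - σ₂' t * σ₂inv t ∈ L1 →
      Tr (D * (σ₂ t * σ₁inv t)) = Tr (σ₁' t * σ₁inv t - σ₂' t * σ₂inv t)) :=
  stmt_17_general L1 Tr hTr σ₁ σ₁' σ₁inv σ₂ σ₂' σ₂inv hinv₁ hinv₂ hσ₁' hσ₂' hα t D hD
end
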